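/- Let f_0 = x, f_1, ..., f_n ∈ ℤ[x] be irreducible monic non-constant polynomials that are pairwise coprime in ℤ[x, 1/k] for a positive integer k, set F = f_0 f_1 ⋯ f_n, and let A = ℤ[x, x^{-1}, f_1^{-1}, ..., f_n^{-1}, 1/k] ⊆ ℚ(x). Given a_0, a_1, ..., a_n ∈ A, there exist t ≥ 0 and a ∈ A such that v_i(a - a_i) ≥ 0 for all 0 ≤ i ≤ n and w(a) > 0, where v_i is the f_i-adic valuation on ℚ(x) and w(g/h) = deg h - deg g. -/

import Mathlib

open scoped Classical

/-- The image of an integer polynomial in the field of rational functions `ℚ(x)`. -/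
noncomputable def toRF (g : Polynomial ℤ) : RatFunc ℚ :=
  algebraMap (Polynomial ℚ) (RatFunc ℚ) (g.map (Int.castRingHom ℚ))

/-- The degree valuation `w(g/h) = deg h - deg g`, with `w 0 = ∞`. -/
noncomputable def wdeg (r : RatFunc ℚ) : WithTop ℤ :=
  if r = 0 then ⊤ else (((r.denom.natDegree : ℤ) - (r.num.natDegree : ℤ) : ℤ) : WithTop ℤ)

/-!
Every element of `A` is `g / (k F)^N` with `g ∈ ℤ[x]`, so it suffices to find `r ∈ ℤ[x]` and `s`
with `f_i^N ∣ r - k^s g_i` for all `i` and to take `a = r / (k^(s+N) F^N)`. Such an `r` comes from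
the Chinese remainder theorem in `ℤ[x, 1/k]`, pulled back to `ℤ[x]` through Bézout identities
`u f_i + w ∏_{j ≠ i} f_j = k^s`; reducing it modulo the monic `F^N` gives `w(a) > 0`.

On the valuation side, `v_i` is nonnegative on `ℤ[x]`: otherwise `v_i(x) < 0` and the leading term
of the monic `f_i` would force `v_i(f_i) < 0`. The Bézout identities then give `v_i(f_j) = 0` for
`j ≠ i`, so `v_i(k^(s+N) F^N) = N ≤ v_i(r - k^s g_i)`.
-/

open Polynomial Finset

namespace IsLocalization.Away

variable {R S : Type*} [CommRing R] [CommRing S] [Algebra R S] {κ : R} [IsLocalization.Away κ S]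

theorem exists_mul_add_mul_eq_pow {a b : R}
    (h : IsCoprime (algebraMap R S a) (algebraMap R S b)) :
    ∃ (u w : R) (s : ℕ), u * a + w * b = κ ^ s := by
  obtain ⟨u', w', huw⟩ := h
  obtain ⟨m, u, hu⟩ := surj κ u'
  obtain ⟨m', w, hw⟩ := surj κ w'
  obtain ⟨e, he⟩ := exists_of_eq (S := S) (x := κ)
    (a := u * κ ^ m' * a + w * κ ^ m * b) (b := κ ^ (m + m')) <| by
    simp only [map_add, map_mul, map_pow, ← hu, ← hw]
    linear_combination (algebraMap R S κ) ^ (m + m') * huw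
  exact ⟨κ ^ e * u * κ ^ m', κ ^ e * w * κ ^ m, e + (m + m'), by
    rw [pow_add]; linear_combination he⟩

theorem exists_forall_dvd_sub {ι : Type*} [Fintype ι] {p : ι → R}
    (hp : Pairwise fun i j => IsCoprime (algebraMap R S (p i)) (algebraMap R S (p j)))
    (g : ι → R) : ∃ (c : R) (s : ℕ), ∀ i, p i ∣ c - κ ^ s * g i := by
  have hcop : ∀ i, IsCoprime (algebraMap R S (p i)) (algebraMap R S (∏ j ∈ univ.erase i, p j)) :=
    fun i => by
      rw [map_prod]
      exact IsCoprime.prod_right fun j hj => hp (ne_of_mem_erase hj).symm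
  choose u w s hbez using fun i => exists_mul_add_mul_eq_pow (κ := κ) (hcop i)
  set S := ∑ j, s j
  -- `w j ∏_{l ≠ j} p l` is `κ ^ s j` modulo `p j` and `0` modulo every other `p i`
  refine ⟨∑ j, κ ^ (S - s j) * w j * (∏ l ∈ univ.erase j, p l) * g j, S, fun i => ?_⟩
  have hS : κ ^ (S - s i) * κ ^ s i = κ ^ S :=
    pow_sub_mul_pow _ (single_le_sum (fun _ _ => Nat.zero_le _) (mem_univ i))
  have hsplit : ∑ j, κ ^ (S - s j) * w j * (∏ l ∈ univ.erase j, p l) * g j - κ ^ S * g i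
      = ∑ j ∈ univ.erase i, κ ^ (S - s j) * w j * (∏ l ∈ univ.erase j, p l) * g j
        - κ ^ (S - s i) * u i * g i * p i := by
    rw [← add_sum_erase _ _ (mem_univ i), ← hS, ← hbez i]
    ring
  rw [hsplit]
  refine dvd_sub (dvd_sum fun j hj => ?_) (dvd_mul_left _ _)
  exact dvd_mul_of_dvd_left (dvd_mul_of_dvd_right
    (dvd_prod_of_mem _ (mem_erase.mpr ⟨(ne_of_mem_erase hj).symm, mem_univ i⟩)) _) _

end IsLocalization.Away

theorem Polynomial.exists_degree_lt_forall_dvd_sub {R S ι : Type*} [CommRing R] [Nontrivial R]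
    [CommRing S] [Algebra R[X] S] {κ : R[X]} [IsLocalization.Away κ S] [Fintype ι]
    {p : ι → R[X]} (hmonic : ∀ i, (p i).Monic)
    (hp : Pairwise fun i j => IsCoprime (algebraMap R[X] S (p i)) (algebraMap R[X] S (p j)))
    (g : ι → R[X]) :
    ∃ (r : R[X]) (s : ℕ), r.degree < (∏ i, p i).degree ∧ ∀ i, p i ∣ r - κ ^ s * g i := by
  obtain ⟨c, s, hc⟩ := IsLocalization.Away.exists_forall_dvd_sub (κ := κ) hp g
  have hP : (∏ i, p i).Monic := monic_prod_of_monic _ _ fun i _ => hmonic i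
  refine ⟨c %ₘ ∏ i, p i, s, degree_modByMonic_lt c hP, fun i => ?_⟩
  rw [modByMonic_eq_sub_mul_div, sub_right_comm]
  exact dvd_sub (hc i) (dvd_mul_of_dvd_left (dvd_prod_of_mem p (mem_univ i)) _)

namespace RingHom

section CommRing

variable {R K : Type*} [CommRing R] [CommRing K] (φ : R →+* K) (d : R)

def awayRange : Subring K where
  carrier := {x | ∃ (N : ℕ) (g : R), φ d ^ N * x = φ g}
  mul_mem' := by
    rintro x y ⟨N, g, hx⟩ ⟨M, h, hy⟩
    exact ⟨N + M, g * h, by rw [map_mul, ← hx, ← hy]; ring⟩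
  one_mem' := ⟨0, 1, by simp⟩
  add_mem' := by
    rintro x y ⟨N, g, hx⟩ ⟨M, h, hy⟩
    exact ⟨N + M, g * d ^ M + h * d ^ N, by
      simp only [map_add, map_mul, map_pow, ← hx, ← hy]; ring⟩
  zero_mem' := ⟨0, 0, by simp⟩
  neg_mem' := by
    rintro x ⟨N, g, hx⟩
    exact ⟨N, -g, by rw [map_neg, ← hx]; ring⟩

variable {φ d}

theorem map_mem_awayRange (r : R) : φ r ∈ φ.awayRange d := ⟨0, r, by simp⟩

theorem exists_pow_mul_eq_of_forall_mem_awayRange {ι : Type*} [Fintype ι] {x : ι → K}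
    (hx : ∀ i, x i ∈ φ.awayRange d) : ∃ (N : ℕ) (g : ι → R), ∀ i, φ d ^ N * x i = φ (g i) := by
  choose N g hg using hx
  refine ⟨∑ i, N i, fun i => d ^ (∑ j, N j - N i) * g i, fun i => ?_⟩
  rw [map_mul, ← hg, map_pow, ← mul_assoc, ← pow_add,
    Nat.sub_add_cancel (single_le_sum (fun _ _ => Nat.zero_le _) (mem_univ i))]

end CommRing

theorem inv_mem_awayRange {R K : Type*} [CommRing R] [Field K] {φ : R →+* K} {c d : R}
    (hc : c ∣ d) : (φ c)⁻¹ ∈ φ.awayRange d := by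
  obtain ⟨c', rfl⟩ := hc
  by_cases h : φ c = 0
  · simp [h, zero_mem]
  · exact ⟨1, c', by rw [map_mul]; field_simp⟩

end RingHom

namespace Subring

theorem zpow_mem_of_inv_mem {K : Type*} [DivisionRing K] (T : Subring K) {x : K}
    (hx : x ∈ T) (hx' : x⁻¹ ∈ T) : ∀ z : ℤ, x ^ z ∈ T
  | (n : ℕ) => by rw [zpow_natCast]; exact pow_mem hx n
  | .negSucc n => by rw [zpow_negSucc, ← inv_pow]; exact pow_mem hx' _

variable {K ι : Type*} [Field K] [Fintype ι]

theorem closure_range_zpow_mul_prod_zpow_le {c : K} {x : ι → K} {T : Subring K}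
    (hc : c ∈ T) (hc' : c⁻¹ ∈ T) (hx : ∀ i, x i ∈ T) (hx' : ∀ i, (x i)⁻¹ ∈ T) :
    closure (Set.range fun p : (ι → ℤ) × ℤ => c ^ p.2 * ∏ j, x j ^ p.1 j) ≤ T := by
  rw [closure_le]
  rintro _ ⟨p, rfl⟩
  exact mul_mem (T.zpow_mem_of_inv_mem hc hc' _)
    (prod_mem fun j _ => T.zpow_mem_of_inv_mem (hx j) (hx' j) _)

theorem mem_closure_range_zpow_mul_prod_zpow [DecidableEq ι] (c : K) (x : ι → K) (i : ι) :
    x i ∈ closure (Set.range fun p : (ι → ℤ) × ℤ => c ^ p.2 * ∏ j, x j ^ p.1 j) := by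
  refine subset_closure ⟨(Pi.single i 1, 0), ?_⟩
  simp only [zpow_zero, one_mul]
  rw [Fintype.prod_eq_single i fun j hj => by rw [Pi.single_eq_of_ne hj, zpow_zero],
    Pi.single_eq_same, zpow_one]

end Subring

namespace AddValuation

section Ring

variable {R Γ₀ : Type*} [Ring R] [LinearOrderedAddCommMonoidWithTop Γ₀] (v : AddValuation R Γ₀)

theorem intCast_nonneg (n : ℤ) : 0 ≤ v n := by
  induction n using Int.induction_on with
  | zero => simp
  | succ m ih => rw [Int.cast_add, Int.cast_one]; exact v.map_le_add ih v.map_one.ge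
  | pred m ih => rw [Int.cast_sub, Int.cast_one]; exact v.map_le_sub ih v.map_one.ge

theorem eval₂_nonneg {x : R} (hx : 0 ≤ v x) (p : ℤ[X]) :
    0 ≤ v (p.eval₂ (Int.castRingHom R) x) := by
  rw [eval₂_eq_sum_range]
  refine v.map_le_sum fun j _ => ?_
  rw [v.map_mul, v.map_pow, eq_intCast]
  exact add_nonneg (v.intCast_nonneg _) (nsmul_nonneg hx _)

theorem eq_zero_of_mul_add_mul_eq {x y u w z : R} (h : u * x + w * y = z) (hz : v z = 0)
    (hx : 0 < v x) (hu : 0 ≤ v u) (hw : 0 ≤ v w) (hy : 0 ≤ v y) : v y = 0 := by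
  refine le_antisymm (not_lt.mp fun hy' => ?_) hy
  have hpos : 0 < v z := h ▸ v.map_lt_add
    (by rw [v.map_mul]; exact hx.trans_le (le_add_of_nonneg_left hu))
    (by rw [v.map_mul]; exact hy'.trans_le (le_add_of_nonneg_left hw))
  exact hpos.ne' hz

end Ring

theorem map_prod {R Γ₀ ι : Type*} [CommRing R] [LinearOrderedAddCommMonoidWithTop Γ₀]
    (v : AddValuation R Γ₀) (s : Finset ι) (y : ι → R) :
    v (∏ i ∈ s, y i) = ∑ i ∈ s, v (y i) := by
  induction s using Finset.induction_on with
  | empty => simp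
  | insert j s hj ih => rw [prod_insert hj, sum_insert hj, v.map_mul, ih]

theorem nonneg_of_monic_eval₂_nonneg {R : Type*} [Ring R] (v : AddValuation R (WithTop ℤ))
    {x : R} {f : ℤ[X]} (hf : f.Monic) (hdeg : 0 < f.natDegree)
    (h : 0 ≤ v (f.eval₂ (Int.castRingHom R) x)) : 0 ≤ v x := by
  by_contra! hx
  obtain ⟨e, he⟩ := WithTop.ne_top_iff_exists.mp (ne_top_of_lt hx)
  have he0 : e < 0 := by rw [← he] at hx; exact_mod_cast hx
  set d := f.natDegree
  have hlead : v (x ^ d) = ((d * e : ℤ) : WithTop ℤ) := by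
    rw [v.map_pow, ← he, ← WithTop.coe_nsmul, nsmul_eq_mul]
  have hlow : v (x ^ d) < v (∑ j ∈ range d, (f.coeff j : R) * x ^ j) := by
    refine v.map_lt_sum (by rw [hlead]; exact WithTop.coe_ne_top) fun j hj => ?_
    rw [hlead, v.map_mul, v.map_pow, ← he, ← WithTop.coe_nsmul]
    refine lt_add_of_nonneg_of_lt (v.intCast_nonneg _) (WithTop.coe_lt_coe.mpr ?_)
    rw [nsmul_eq_mul]
    exact mul_lt_mul_of_neg_right (by exact_mod_cast mem_range.mp hj) he0
  have heval : f.eval₂ (Int.castRingHom R) x = x ^ d + ∑ j ∈ range d, (f.coeff j : R) * x ^ j := by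
    rw [eval₂_eq_sum_range, sum_range_succ, hf.coeff_natDegree, _root_.map_one, one_mul, add_comm]
    simp only [eq_intCast, d]
  rw [heval, v.map_add_eq_of_lt_left hlow, hlead] at h
  have : (0 : ℤ) ≤ d * e := by exact_mod_cast h
  nlinarith

theorem nonneg_map_div_of_dvd {R K : Type*} [CommRing R] [Field K] (φ : R →+* K)
    (v : AddValuation K (WithTop ℤ)) (hφ : ∀ r, 0 ≤ v (φ r)) {a p q : R} (hpa : p ∣ a)
    (hp : φ p ≠ 0) (hq : v (φ q) = 0) : 0 ≤ v (φ a / φ (p * q)) := by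
  obtain ⟨b, rfl⟩ := hpa
  rw [_root_.map_mul, _root_.map_mul, mul_div_mul_left _ _ hp, v.map_div, hq, sub_zero]
  exact hφ b

end AddValuation

noncomputable def toRFHom : ℤ[X] →+* RatFunc ℚ :=
  (algebraMap ℚ[X] (RatFunc ℚ)).comp (mapRingHom (Int.castRingHom ℚ))

@[simp]
theorem toRFHom_apply (p : ℤ[X]) : toRFHom p = toRF p := rfl

theorem toRF_C (c : ℤ) : toRF (C c) = c := by
  rw [← toRFHom_apply, eq_intCast C c, map_intCast]

theorem toRF_eq_eval₂ (p : ℤ[X]) : toRF p = p.eval₂ (Int.castRingHom _) (toRF X) := by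
  rw [← toRFHom_apply, ← coe_eval₂RingHom]
  congr 1
  exact ringHom_ext' (RingHom.ext_int _ _) (by simp)

theorem toRF_injective : Function.Injective toRF :=
  (RatFunc.algebraMap_injective ℚ).comp (map_injective _ Int.cast_injective)

theorem toRF_ne_zero {p : ℤ[X]} (hp : p ≠ 0) : toRF p ≠ 0 :=
  (map_ne_zero_iff toRFHom toRF_injective).mpr hp

theorem wdeg_eq_neg_intDegree {r : RatFunc ℚ} (hr : r ≠ 0) :
    wdeg r = ((-r.intDegree : ℤ) : WithTop ℤ) := by
  rw [wdeg, if_neg hr, RatFunc.intDegree, neg_sub]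

theorem wdeg_toRF_div_pos {p q : ℤ[X]} (hq : q ≠ 0) (hpq : p.degree < q.degree) :
    0 < wdeg (toRF p / toRF q) := by
  by_cases hp : p = 0
  · simp [hp, wdeg, ← toRFHom_apply]
  rw [wdeg_eq_neg_intDegree (div_ne_zero (toRF_ne_zero hp) (toRF_ne_zero hq)),
    RatFunc.intDegree_div (toRF_ne_zero hp) (toRF_ne_zero hq), toRF, toRF,
    RatFunc.intDegree_polynomial, RatFunc.intDegree_polynomial,
    natDegree_map_eq_of_injective Int.cast_injective,
    natDegree_map_eq_of_injective Int.cast_injective]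
  have := natDegree_lt_natDegree hp hpq
  exact WithTop.coe_lt_coe.mpr (by omega)

theorem toRF_div_sub_eq {k : ℤ} (hk : k ≠ 0) {F : ℤ[X]} (hF : F ≠ 0) {N : ℕ} {x : RatFunc ℚ}
    {g : ℤ[X]} (hx : toRF (C k * F) ^ N * x = toRF g) (r : ℤ[X]) (s : ℕ) :
    toRF r / toRF (C k ^ (s + N) * F ^ N) - x
      = toRF (r - C k ^ s * g) / toRF (C k ^ (s + N) * F ^ N) := by
  have hD : toRF (C k ^ (s + N) * F ^ N) ≠ 0 :=
    toRF_ne_zero (mul_ne_zero (pow_ne_zero _ (C_ne_zero.mpr hk)) (pow_ne_zero _ hF))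
  have hD' : toRF (C k ^ (s + N) * F ^ N) = toRF (C k) ^ s * toRF (C k * F) ^ N := by
    simp only [← toRFHom_apply, map_mul, map_pow]
    ring
  rw [eq_div_iff hD, sub_mul, div_mul_cancel₀ _ hD, hD', mul_left_comm, mul_comm x, hx]
  simp only [← toRFHom_apply, map_sub, map_mul, map_pow]

section Generators

variable {ι : Type*} [Fintype ι] (k : ℤ) (f : ι → ℤ[X])

theorem closure_le_awayRange :
    Subring.closure
        (Set.range fun p : (ι → ℤ) × ℤ => (k : RatFunc ℚ) ^ p.2 * ∏ j, toRF (f j) ^ p.1 j)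
      ≤ toRFHom.awayRange (C k * ∏ j, f j) := by
  have hk : (k : RatFunc ℚ) = toRFHom (C k) := (toRF_C k).symm
  refine Subring.closure_range_zpow_mul_prod_zpow_le ?_ ?_
    (fun j => RingHom.map_mem_awayRange (f j)) (fun j => RingHom.inv_mem_awayRange ?_)
  · rw [hk]; exact RingHom.map_mem_awayRange _
  · rw [hk]; exact RingHom.inv_mem_awayRange (dvd_mul_right _ _)
  · exact (dvd_prod_of_mem f (mem_univ j)).mul_left _

theorem toRF_div_mem_closure [DecidableEq ι] {i₀ : ι} (hX : f i₀ = X) (r : ℤ[X]) (m N : ℕ) :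
    toRF r / toRF (C k ^ m * (∏ j, f j) ^ N) ∈ Subring.closure
      (Set.range fun p : (ι → ℤ) × ℤ => (k : RatFunc ℚ) ^ p.2 * ∏ j, toRF (f j) ^ p.1 j) := by
  have hXmem := Subring.mem_closure_range_zpow_mul_prod_zpow (k : RatFunc ℚ) (toRF ∘ f) i₀
  simp only [Function.comp_apply, hX] at hXmem
  have hr : toRF r ∈ Subring.closure
      (Set.range fun p : (ι → ℤ) × ℤ => (k : RatFunc ℚ) ^ p.2 * ∏ j, toRF (f j) ^ p.1 j) := by
    rw [toRF_eq_eval₂, eval₂_eq_sum_range]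
    exact sum_mem fun j _ => mul_mem (intCast_mem _ _) (pow_mem hXmem j)
  have hinv : (toRF (C k ^ m * (∏ j, f j) ^ N))⁻¹
      = (k : RatFunc ℚ) ^ (-m : ℤ) * ∏ j, toRF (f j) ^ (-N : ℤ) := by
    rw [← toRFHom_apply, map_mul, map_pow, map_pow, map_prod]
    simp only [toRFHom_apply, toRF_C, zpow_neg, zpow_natCast, mul_inv, ← prod_pow,
      prod_inv_distrib]
  rw [div_eq_mul_inv, hinv]
  exact Subring.mul_mem _ hr (Subring.subset_closure ⟨(fun _ => -N, -m), rfl⟩)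

end Generators

namespace AddValuation

variable (v : AddValuation (RatFunc ℚ) (WithTop ℤ))

theorem toRF_nonneg_of_monic {f : ℤ[X]} (hf : f.Monic) (hdeg : 0 < f.natDegree)
    (hvf : 0 ≤ v (toRF f)) (p : ℤ[X]) : 0 ≤ v (toRF p) := by
  rw [toRF_eq_eval₂] at hvf ⊢
  exact v.eval₂_nonneg (v.nonneg_of_monic_eval₂_nonneg hf hdeg hvf) p

theorem toRF_eq_zero_of_isCoprime {k : ℤ} (hpoly : ∀ p, 0 ≤ v (toRF p)) (hk : v k = 0)
    {a b : ℤ[X]} (ha : 0 < v (toRF a))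
    (hab : IsCoprime (algebraMap ℤ[X] (Localization.Away (C k)) a)
      (algebraMap ℤ[X] (Localization.Away (C k)) b)) : v (toRF b) = 0 := by
  obtain ⟨u, w, s, h⟩ := IsLocalization.Away.exists_mul_add_mul_eq_pow (κ := C k) hab
  have h' : toRF u * toRF a + toRF w * toRF b = toRF (C k) ^ s := by
    simp only [← toRFHom_apply, ← _root_.map_mul, ← _root_.map_add, ← _root_.map_pow, h]
  refine v.eq_zero_of_mul_add_mul_eq h' ?_ ha (hpoly u) (hpoly w) (hpoly b)
  rw [v.map_pow, toRF_C, hk, nsmul_zero]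

theorem nonneg_toRF_div_of_dvd {ι : Type*} [Fintype ι] {k : ℤ} {f : ι → ℤ[X]} {i : ι}
    (hpoly : ∀ p, 0 ≤ v (toRF p)) (hk : v k = 0) (hf : ∀ j ≠ i, v (toRF (f j)) = 0)
    (hfi : f i ≠ 0) {a : ℤ[X]} {m N : ℕ} (ha : f i ^ N ∣ a) :
    0 ≤ v (toRF a / toRF (C k ^ m * (∏ j, f j) ^ N)) := by
  have hD : C k ^ m * (∏ j, f j) ^ N = f i ^ N * (C k ^ m * ∏ j ∈ univ.erase i, f j ^ N) := by
    rw [← prod_pow, ← mul_prod_erase univ _ (mem_univ i)]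
    ring
  rw [hD]
  refine v.nonneg_map_div_of_dvd toRFHom hpoly ha (toRF_ne_zero (pow_ne_zero N hfi)) ?_
  rw [_root_.map_mul, _root_.map_pow, _root_.map_prod, v.map_mul, v.map_pow, v.map_prod,
    toRFHom_apply, toRF_C, hk, nsmul_zero, zero_add]
  exact sum_eq_zero fun j hj => by
    rw [_root_.map_pow, v.map_pow, toRFHom_apply, hf j (ne_of_mem_erase hj), nsmul_zero]

end AddValuation

theorem stmt7_general (n : ℕ) (k : ℤ) (hk : 0 < k)
    (f : Fin (n + 1) → Polynomial ℤ)
    (hf0 : f 0 = Polynomial.X)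
    (hmonic : ∀ i, (f i).Monic)
    (hdeg : ∀ i, 0 < (f i).natDegree)
    (hcop : ∀ i j, i ≠ j →
      IsCoprime
        (algebraMap (Polynomial ℤ) (Localization.Away (Polynomial.C k)) (f i))
        (algebraMap (Polynomial ℤ) (Localization.Away (Polynomial.C k)) (f j)))
    (A : Subring (RatFunc ℚ))
    (hA : A = Subring.closure (Set.range
      fun p : (Fin (n + 1) → ℤ) × ℤ => (k : RatFunc ℚ) ^ p.2 * ∏ j, toRF (f j) ^ p.1 j))
    (v : Fin (n + 1) → RatFunc ℚ → WithTop ℤ)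
    (hv0 : ∀ i, v i 0 = ⊤)
    (hvQ : ∀ i, ∀ c : ℚ, c ≠ 0 → v i (algebraMap ℚ (RatFunc ℚ) c) = 0)
    (hvmul : ∀ i a b, v i (a * b) = v i a + v i b)
    (hvadd : ∀ i a b, min (v i a) (v i b) ≤ v i (a + b))
    (hvf : ∀ i, v i (toRF (f i)) = 1)
    (aa : Fin (n + 1) → RatFunc ℚ) (haa : ∀ i, aa i ∈ A) :
    ∃ a ∈ A, (∀ i, 0 ≤ v i (a - aa i)) ∧ 0 < wdeg a := by
  subst hA
  let w i : AddValuation (RatFunc ℚ) (WithTop ℤ) :=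
    .of (v i) (hv0 i) (by simpa using hvQ i 1 one_ne_zero) (hvadd i) (hvmul i)
  have hwk : ∀ i, w i k = 0 := fun i =>
    (by simpa using hvQ i k (by exact_mod_cast hk.ne') : v i k = 0)
  have hwf : ∀ i, 0 < w i (toRF (f i)) := fun i =>
    (by rw [hvf i]; exact zero_lt_one : 0 < v i (toRF (f i)))
  have hpoly : ∀ i p, 0 ≤ w i (toRF p) := fun i =>
    (w i).toRF_nonneg_of_monic (hmonic i) (hdeg i) (hwf i).le
  obtain ⟨N, g, hg⟩ := RingHom.exists_pow_mul_eq_of_forall_mem_awayRange fun i =>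
    closure_le_awayRange k f (haa i)
  obtain ⟨r, s, hrdeg, hr⟩ := exists_degree_lt_forall_dvd_sub (S := Localization.Away (C k))
    (κ := C k) (fun i => (hmonic i).pow N)
    (fun i j hij => by simpa only [map_pow] using (hcop i j hij).pow) g
  have hF : ∏ j, f j ≠ 0 := (monic_prod_of_monic _ _ fun j _ => hmonic j).ne_zero
  refine ⟨toRF r / toRF (C k ^ (s + N) * (∏ j, f j) ^ N), toRF_div_mem_closure k f hf0 r _ _,
    fun i => ?_, wdeg_toRF_div_pos (mul_ne_zero (pow_ne_zero _ (C_ne_zero.mpr hk.ne'))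
      (pow_ne_zero _ hF)) ?_⟩
  · rw [toRF_div_sub_eq hk.ne' hF (hg i)]
    exact (w i).nonneg_toRF_div_of_dvd (hpoly i) (hwk i)
      (fun j hji => (w i).toRF_eq_zero_of_isCoprime (hpoly i) (hwk i) (hwf i) (hcop i j hji.symm))
      (hmonic i).ne_zero (hr i)
  · rwa [← C_pow, degree_C_mul (pow_ne_zero _ hk.ne'), ← prod_pow]

/-- given `a₀, …, aₙ` in `A = ℤ[x, x⁻¹, f₁⁻¹, …, fₙ⁻¹, 1/k] ⊆ ℚ(x)`,
with `f₀ = x` and the `fᵢ` irreducible monic non-constant integer polynomials,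
pairwise coprime in `ℤ[x, 1/k]`, there exists `a ∈ A` with `vᵢ(a - aᵢ) ≥ 0` for
each `fᵢ`-adic valuation `vᵢ`, and `w(a) > 0` for the degree valuation `w`. -/
theorem stmt7 (n : ℕ) (k : ℤ) (hk : 0 < k)
    (f : Fin (n + 1) → Polynomial ℤ)
    (hf0 : f 0 = Polynomial.X)
    (hirr : ∀ i, Irreducible (f i))
    (hmonic : ∀ i, (f i).Monic)
    (hdeg : ∀ i, 0 < (f i).natDegree)
    (hcop : ∀ i j, i ≠ j →
      IsCoprime
        (algebraMap (Polynomial ℤ) (Localization.Away (Polynomial.C k)) (f i))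
        (algebraMap (Polynomial ℤ) (Localization.Away (Polynomial.C k)) (f j)))
    (A : Subring (RatFunc ℚ))
    (hA : A = Subring.closure (Set.range
      fun p : (Fin (n + 1) → ℤ) × ℤ => (k : RatFunc ℚ) ^ p.2 * ∏ j, toRF (f j) ^ p.1 j))
    (v : Fin (n + 1) → RatFunc ℚ → WithTop ℤ)
    (hv0 : ∀ i, v i 0 = ⊤)
    (hvQ : ∀ i, ∀ c : ℚ, c ≠ 0 → v i (algebraMap ℚ (RatFunc ℚ) c) = 0)
    (hvmul : ∀ i a b, v i (a * b) = v i a + v i b)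
    (hvadd : ∀ i a b, min (v i a) (v i b) ≤ v i (a + b))
    (hvf : ∀ i, v i (toRF (f i)) = 1)
    (aa : Fin (n + 1) → RatFunc ℚ) (haa : ∀ i, aa i ∈ A) :
    ∃ a ∈ A, (∀ i, 0 ≤ v i (a - aa i)) ∧ 0 < wdeg a :=
  stmt7_general n k hk f hf0 hmonic hdeg hcop A hA v hv0 hvQ hvmul hvadd hvf aa haa
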